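/- Let G be a finite graph with Laplacian L, U ⊂ V with S = V∖U a Λ-set, ε > 0, and k = 2^l, l ∈ ℕ. Then there exist weights θ_u ∈ ℝ, u ∈ U, such that for every f ∈ L₂(G), |∑_{v∈V} f(v) − ∑_{u∈U} f(u) θ_u| ≤ 2 √|S| Λ^k ‖(εI+L)^k f‖. -/

import Mathlib

open Matrix

/-- The ℓ²-norm of a function on the vertices of a finite graph. -/
noncomputable def gnorm {V : Type*} [Fintype V] (f : V → ℝ) : ℝ :=
  Real.sqrt (∑ v, f v ^ 2)

/-- The operator `εI + L` used in the definition of variational splines. -/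
noncomputable def splineOp {V : Type*} [Fintype V] [DecidableEq V]
    (G : SimpleGraph V) [DecidableRel G.Adj] (ε : ℝ) : Matrix V V ℝ :=
  ε • (1 : Matrix V V ℝ) + G.lapMatrix ℝ

/-! Put `A = (εI + L)^k` and let `P` be the projection onto the functions vanishing on `U` that is
orthogonal for `⟨A·, A·⟩`. Then `f - P f` is the variational spline interpolating `f` on `U`, and
`θ_u = ∑_v (δ_u - P δ_u)(v)` is the sum of the Lagrangian spline at `u`, so the quadrature error is
`∑_v (P f)(v)`. This sum is supported on `S`, hence bounded by `√|S| ‖P f‖`. Since `L` is symmetric,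
`‖L x‖² = ⟨x, L² x⟩ ≤ ‖x‖ ‖L² x‖`, so the `Λ`-inequality squares to `‖φ‖ ≤ Λ^(2^l) ‖L^(2^l) φ‖`;
positivity of `L` gives `‖L^k φ‖ ≤ ‖A φ‖`, and `‖A P f‖ ≤ ‖A f‖` because `P` is `A`-orthogonal. -/

open Finset
open scoped InnerProductSpace

section InnerProductSpace

variable {𝕜 E F : Type*} [RCLike 𝕜]

theorem LinearEquiv.exists_projection_norm_apply_le [AddCommGroup E] [Module 𝕜 E]
    [NormedAddCommGroup F] [InnerProductSpace 𝕜 F] (A : E ≃ₗ[𝕜] F) (W : Submodule 𝕜 E)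
    [(W.map (A : E →ₗ[𝕜] F)).HasOrthogonalProjection] :
    ∃ P : E →ₗ[𝕜] E, (∀ f, P f ∈ W) ∧ (∀ w ∈ W, P w = w) ∧ ∀ f, ‖A (P f)‖ ≤ ‖A f‖ := by
  refine ⟨A.symm.toLinearMap ∘ₗ (W.map (A : E →ₗ[𝕜] F)).starProjection.toLinearMap ∘ₗ A.toLinearMap,
    fun f => ?_, fun w hw => ?_, fun f => ?_⟩
  · exact (Submodule.mem_map_equiv W).mp ((W.map (A : E →ₗ[𝕜] F)).starProjection_apply_mem (A f))
  · simp only [LinearMap.comp_apply, LinearEquiv.coe_coe, ContinuousLinearMap.coe_coe]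
    have hAw : A w ∈ W.map (A : E →ₗ[𝕜] F) := (Submodule.mem_map_equiv W).mpr (by simpa using hw)
    rw [Submodule.starProjection_eq_self_iff.mpr hAw, A.symm_apply_apply]
  · simpa using (W.map (A : E →ₗ[𝕜] F)).norm_starProjection_apply_le (A f)

variable [NormedAddCommGroup E] [InnerProductSpace 𝕜 E] {T : E →ₗ[𝕜] E}

theorem LinearMap.IsSymmetric.norm_le_sq_mul_norm_apply_apply (hT : T.IsSymmetric) {c : ℝ}
    {x : E} (hx : ‖x‖ ≤ c * ‖T x‖) : ‖x‖ ≤ c ^ 2 * ‖T (T x)‖ := by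
  have key : ‖T x‖ ^ 2 ≤ c * ‖T x‖ * ‖T (T x)‖ := calc
    ‖T x‖ ^ 2 = RCLike.re ⟪x, T (T x)⟫_𝕜 := by rw [← hT, ← @norm_sq_eq_re_inner 𝕜]
    _ ≤ ‖x‖ * ‖T (T x)‖ := re_inner_le_norm _ _
    _ ≤ c * ‖T x‖ * ‖T (T x)‖ := by gcongr
  rcases (norm_nonneg (T x)).eq_or_lt with h0 | hpos
  · rw [← h0, mul_zero] at hx
    exact hx.trans (by positivity)
  · have hc : 0 ≤ c := nonneg_of_mul_nonneg_left ((norm_nonneg x).trans hx) hpos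
    have hTx : ‖T x‖ ≤ c * ‖T (T x)‖ := by nlinarith
    calc ‖x‖ ≤ c * ‖T x‖ := hx
      _ ≤ c * (c * ‖T (T x)‖) := by gcongr
      _ = c ^ 2 * ‖T (T x)‖ := by ring

theorem LinearMap.IsSymmetric.norm_le_pow_mul_norm_pow_apply (hT : T.IsSymmetric) {c : ℝ}
    {x : E} (hx : ‖x‖ ≤ c * ‖T x‖) (j : ℕ) : ‖x‖ ≤ c ^ 2 ^ j * ‖(T ^ 2 ^ j) x‖ := by
  induction j with
  | zero => simpa using hx
  | succ j ih =>
    have := (hT.pow (2 ^ j)).norm_le_sq_mul_norm_apply_apply ih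
    rwa [← pow_mul, ← Module.End.mul_apply, ← pow_add, ← two_mul, ← pow_succ'] at this

end InnerProductSpace

section RealInnerProductSpace

variable {E : Type*} [NormedAddCommGroup E] [InnerProductSpace ℝ E] {T : E →ₗ[ℝ] E} {ε : ℝ}

theorem LinearMap.IsPositive.add_sq_le_norm_smul_add_apply_sq (hT : T.IsPositive) (hε : 0 ≤ ε)
    (y : E) : ε ^ 2 * ‖y‖ ^ 2 + ‖T y‖ ^ 2 ≤ ‖ε • y + T y‖ ^ 2 := by
  have := hT.inner_nonneg_right y
  rw [norm_add_sq_real, real_inner_smul_left, norm_smul, Real.norm_of_nonneg hε]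
  nlinarith

theorem LinearMap.IsPositive.norm_apply_le_norm_smul_add_apply (hT : T.IsPositive)
    (hε : 0 ≤ ε) (y : E) : ‖T y‖ ≤ ‖ε • y + T y‖ :=
  (sq_le_sq₀ (norm_nonneg _) (norm_nonneg _)).mp <| by
    nlinarith [hT.add_sq_le_norm_smul_add_apply_sq hε y]

theorem LinearMap.IsPositive.injective_smul_add (hT : T.IsPositive) (hε : 0 < ε) :
    Function.Injective (ε • 1 + T : E →ₗ[ℝ] E) := by
  refine (injective_iff_map_eq_zero _).mpr fun y hy => norm_eq_zero.mp ?_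
  have hsq := hT.add_sq_le_norm_smul_add_apply_sq hε.le y
  simp only [LinearMap.add_apply, LinearMap.smul_apply, Module.End.one_apply] at hy
  rw [hy, norm_zero] at hsq
  have hε2 := pow_pos hε 2
  have : ‖y‖ ^ 2 ≤ 0 := by nlinarith [sq_nonneg ‖T y‖]
  exact pow_eq_zero_iff two_ne_zero |>.mp (le_antisymm this (sq_nonneg _))

theorem LinearMap.IsPositive.norm_pow_apply_le (hT : T.IsPositive) (hε : 0 ≤ ε) (n : ℕ) (x : E) :
    ‖(T ^ n) x‖ ≤ ‖((ε • 1 + T : E →ₗ[ℝ] E) ^ n) x‖ := by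
  induction n generalizing x with
  | zero => simp
  | succ n ih =>
    set S : E →ₗ[ℝ] E := ε • 1 + T
    have hcomm : Commute T (S ^ n) :=
      (((Commute.one_right T).smul_right ε).add_right (Commute.refl T)).pow_right n
    calc ‖(T ^ (n + 1)) x‖ = ‖(T ^ n) (T x)‖ := by rw [pow_succ, Module.End.mul_apply]
      _ ≤ ‖(S ^ n) (T x)‖ := ih (T x)
      _ = ‖T ((S ^ n) x)‖ := by rw [← Module.End.mul_apply, ← hcomm.eq, Module.End.mul_apply]
      _ ≤ ‖ε • (S ^ n) x + T ((S ^ n) x)‖ := hT.norm_apply_le_norm_smul_add_apply hε _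
      _ = ‖(S ^ (n + 1)) x‖ := by rw [pow_succ', Module.End.mul_apply]; rfl

end RealInnerProductSpace

theorem LinearMap.apply_eq_sum_mul_apply_single {R V : Type*} [CommRing R] [DecidableEq V]
    (φ : (V → R) →ₗ[R] R) (U : Finset V) (hφ : ∀ g : V → R, (∀ u ∈ U, g u = 0) → φ g = 0)
    (f : V → R) : φ f = ∑ u ∈ U, f u * φ (Pi.single u 1) := by
  set g : V → R := ∑ u ∈ U, Pi.single u (f u)
  have hfg : ∀ u ∈ U, (f - g) u = 0 := fun u hu => by
    simp [g, Finset.sum_apply, Finset.sum_pi_single, hu]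
  calc φ f = φ (f - g) + φ g := by rw [← map_add, sub_add_cancel]
    _ = ∑ u ∈ U, f u * φ (Pi.single u 1) := by
      rw [hφ _ hfg, zero_add, map_sum]
      refine Finset.sum_congr rfl fun u _ => ?_
      rw [← smul_eq_mul, ← map_smul, ← Pi.single_smul, smul_eq_mul, mul_one]

theorem exists_sum_sub_sum_mul_eq_sum_apply {R V : Type*} [CommRing R] [Fintype V]
    [DecidableEq V] (U : Finset V) (P : (V → R) →ₗ[R] V → R)
    (hP : ∀ g : V → R, (∀ u ∈ U, g u = 0) → P g = g) :
    ∃ θ : V → R, ∀ f : V → R, ∑ v, f v - ∑ u ∈ U, f u * θ u = ∑ v, P f v := by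
  let ψ : (V → R) →ₗ[R] R := ∑ v, LinearMap.proj v ∘ₗ (LinearMap.id - P)
  refine ⟨fun u => ψ (Pi.single u 1), fun f => ?_⟩
  rw [← ψ.apply_eq_sum_mul_apply_single U (fun g hg => ?_) f]
  · simp [ψ]
  · simp [ψ, hP g hg]

theorem Matrix.toEuclideanLin_pow {𝕜 n : Type*} [RCLike 𝕜] [Fintype n] [DecidableEq n]
    (M : Matrix n n 𝕜) (k : ℕ) : toEuclideanLin (M ^ k) = toEuclideanLin M ^ k := by
  simp [← coe_toEuclideanCLM_eq_toEuclideanLin]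

section Vertices

variable {V : Type*} [Fintype V]

theorem abs_sum_le_sqrt_card_mul_gnorm {s : Finset V} {φ : V → ℝ} (hφ : ∀ v ∉ s, φ v = 0) :
    |∑ v, φ v| ≤ Real.sqrt #s * gnorm φ := by
  rw [← Finset.sum_subset (Finset.subset_univ s) fun v _ hv => hφ v hv, gnorm,
    ← Real.sqrt_mul (Nat.cast_nonneg _), ← Real.sqrt_sq_eq_abs]
  refine Real.sqrt_le_sqrt (sq_sum_le_card_mul_sum_sq.trans ?_)
  exact mul_le_mul_of_nonneg_left (Finset.sum_le_sum_of_subset_of_nonneg (Finset.subset_univ s)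
    fun v _ _ => sq_nonneg _) (Nat.cast_nonneg _)

theorem gnorm_eq_norm_toLp (f : V → ℝ) : gnorm f = ‖(WithLp.toLp 2 f : EuclideanSpace ℝ V)‖ := by
  simp [gnorm, EuclideanSpace.norm_eq]

variable [DecidableEq V]

theorem gnorm_mulVec_eq_norm_toEuclideanLin (M : Matrix V V ℝ) (f : V → ℝ) :
    gnorm (M *ᵥ f) = ‖toEuclideanLin M (WithLp.toLp 2 f)‖ := by
  simp [gnorm_eq_norm_toLp]

theorem toEuclideanLin_splineOp (G : SimpleGraph V) [DecidableRel G.Adj] (ε : ℝ) :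
    toEuclideanLin (splineOp G ε) = ε • 1 + toEuclideanLin (G.lapMatrix ℝ) := by
  simp [splineOp, ← coe_toEuclideanCLM_eq_toEuclideanLin]

theorem gnorm_splineOp_pow_mulVec (G : SimpleGraph V) [DecidableRel G.Adj] (ε : ℝ) (n : ℕ)
    (f : V → ℝ) : gnorm (splineOp G ε ^ n *ᵥ f) =
      ‖((ε • 1 + toEuclideanLin (G.lapMatrix ℝ)) ^ n) (WithLp.toLp 2 f)‖ := by
  rw [gnorm_mulVec_eq_norm_toEuclideanLin, toEuclideanLin_pow, toEuclideanLin_splineOp]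

variable (G : SimpleGraph V) [DecidableRel G.Adj] {ε : ℝ}

theorem gnorm_le_pow_mul_gnorm_splineOp_pow_mulVec {Λ : ℝ} (hΛ : 0 ≤ Λ) (hε : 0 ≤ ε)
    {φ : V → ℝ} (hφ : gnorm φ ≤ Λ * gnorm (G.lapMatrix ℝ *ᵥ φ)) (l : ℕ) :
    gnorm φ ≤ Λ ^ 2 ^ l * gnorm (splineOp G ε ^ 2 ^ l *ᵥ φ) := by
  have hT := isPositive_toEuclideanLin_iff.mpr (G.posSemidef_lapMatrix ℝ)
  rw [gnorm_mulVec_eq_norm_toEuclideanLin, gnorm_eq_norm_toLp] at hφ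
  rw [gnorm_splineOp_pow_mulVec, gnorm_eq_norm_toLp]
  calc _ ≤ Λ ^ 2 ^ l * ‖(toEuclideanLin (G.lapMatrix ℝ) ^ 2 ^ l) (WithLp.toLp 2 φ)‖ :=
        hT.isSymmetric.norm_le_pow_mul_norm_pow_apply hφ l
    _ ≤ _ := by
        gcongr
        exact hT.norm_pow_apply_le hε _ _

theorem exists_projection_gnorm_splineOp_pow_mulVec_le (U : Finset V) (hε : 0 < ε) (n : ℕ) :
    ∃ P : (V → ℝ) →ₗ[ℝ] V → ℝ, (∀ f, ∀ u ∈ U, P f u = 0) ∧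
      (∀ g : V → ℝ, (∀ u ∈ U, g u = 0) → P g = g) ∧
      ∀ f, gnorm (splineOp G ε ^ n *ᵥ P f) ≤ gnorm (splineOp G ε ^ n *ᵥ f) := by
  have hT := isPositive_toEuclideanLin_iff.mpr (G.posSemidef_lapMatrix ℝ)
  have hinj : Function.Injective ⇑((ε • 1 + toEuclideanLin (G.lapMatrix ℝ)) ^ n) := by
    rw [Module.End.coe_pow]
    exact (hT.injective_smul_add hε).iterate n
  let A : (V → ℝ) ≃ₗ[ℝ] EuclideanSpace ℝ V :=
    (WithLp.linearEquiv 2 ℝ (V → ℝ)).symm ≪≫ₗ LinearEquiv.ofInjectiveEndo _ hinj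
  obtain ⟨P, hPW, hPfix, hPnorm⟩ := A.exists_projection_norm_apply_le (Submodule.pi U fun _ => ⊥)
  simp only [Submodule.mem_pi, Submodule.mem_bot, Finset.mem_coe] at hPW hPfix
  exact ⟨P, hPW, hPfix, fun f => by
    rw [gnorm_splineOp_pow_mulVec, gnorm_splineOp_pow_mulVec]
    exact hPnorm f⟩

end Vertices

/-- If `S = V \ U` is a `Λ`-set, `ε > 0` and `k = 2^l`, there exist weights `θ_u` such that
for every `f`, `|∑_{v∈V} f(v) − ∑_{u∈U} f(u) θ_u| ≤ 2 √|S| Λ^k ‖(εI+L)^k f‖`. -/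
theorem stmt_9 {V : Type*} [Fintype V] [DecidableEq V]
    (G : SimpleGraph V) [DecidableRel G.Adj]
    (U : Finset V) (Λ : ℝ) (hΛ : 0 < Λ)
    (hS : ∀ φ : V → ℝ, (∀ v ∈ U, φ v = 0) →
      gnorm φ ≤ Λ * gnorm ((G.lapMatrix ℝ).mulVec φ))
    (ε : ℝ) (hε : 0 < ε) (l : ℕ) :
    ∃ θ : V → ℝ, ∀ f : V → ℝ,
      |∑ v, f v - ∑ u ∈ U, f u * θ u| ≤
        2 * Real.sqrt (Uᶜ.card) * Λ ^ (2 ^ l) *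
          gnorm (((splineOp G ε) ^ (2 ^ l)).mulVec f) := by
  obtain ⟨P, hPW, hPfix, hPnorm⟩ := exists_projection_gnorm_splineOp_pow_mulVec_le G U hε (2 ^ l)
  obtain ⟨θ, hθ⟩ := exists_sum_sub_sum_mul_eq_sum_apply U P hPfix
  refine ⟨θ, fun f => ?_⟩
  have hΛ_pow : 0 ≤ Λ ^ 2 ^ l := pow_nonneg hΛ.le _
  rw [hθ]
  calc |∑ v, P f v| ≤ √(#Uᶜ : ℝ) * gnorm (P f) :=
        abs_sum_le_sqrt_card_mul_gnorm fun v hv => hPW f v (by simpa using hv)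
    _ ≤ √(#Uᶜ : ℝ) * (Λ ^ 2 ^ l * gnorm (splineOp G ε ^ 2 ^ l *ᵥ P f)) := by
        gcongr
        exact gnorm_le_pow_mul_gnorm_splineOp_pow_mulVec G hΛ.le hε.le (hS _ (hPW f)) l
    _ ≤ √(#Uᶜ : ℝ) * (Λ ^ 2 ^ l * gnorm (splineOp G ε ^ 2 ^ l *ᵥ f)) := by
        gcongr
        exact hPnorm f
    _ ≤ 2 * √(#Uᶜ : ℝ) * Λ ^ 2 ^ l * gnorm (splineOp G ε ^ 2 ^ l *ᵥ f) := by
        have hf : 0 ≤ gnorm (splineOp G ε ^ 2 ^ l *ᵥ f) := Real.sqrt_nonneg _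
        have := mul_nonneg (Real.sqrt_nonneg (#Uᶜ : ℝ)) (mul_nonneg hΛ_pow hf)
        linarith
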